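/- arXiv:2310.01965 — 4 statements merged into one kernel-verified Lean document; each statement's English description precedes it below -/
import Mathlib

section
/- Let 0 ≤ δ < 1, let φ be analytic on the unit disk with φ(0)=0, φ'(0)=1 and Re(zφ'(z)/φ(z)) > δ on 𝔻 (starlike of order δ), and let α, β ≥ 0 satisfy α(β + 2(1−δ)) ≤ 3. Define F(z) = ∫₀ᶻ (φ(ζ)/(ζ(1−ζ)^β))^α dζ. Then for all z ∈ 𝔻, Re(1 + zF''(z)/F'(z)) > −1/2. -/
open Complex Metric

lemma re_half (z : ℂ) (hz : ‖z‖ < 1) : -(1/2 : ℝ) < (z / (1 - z)).re := by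
  have h2 : z.re ^ 2 + z.im ^ 2 < 1 := by
    have := Complex.normSq_apply z
    have habs : ‖z‖ < 1 := hz
    have hn : Complex.normSq z < 1 := by
      rw [← Complex.sq_norm]
      nlinarith [norm_nonneg z]
    nlinarith [hn, Complex.normSq_apply z]
  have hz1 : (1 : ℂ) - z ≠ 0 := by
    intro h
    have : z = 1 := by linear_combination -h
    rw [this] at hz; simp at hz
  have hn : 0 < Complex.normSq (1 - z) := by
    exact Complex.normSq_pos.2 hz1
  rw [Complex.div_re, ← add_div, lt_div_iff₀ hn]
  simp only [Complex.normSq_apply, Complex.sub_re, Complex.sub_im, Complex.one_re,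
    Complex.one_im]
  nlinarith [h2]

/-- If `φ` is starlike of order `δ` and `α(β+2(1−δ)) ≤ 3` with `α,β ≥ 0`, then the
Cesàro-type transform `F` satisfies `Re(1 + zF''(z)/F'(z)) > −1/2` on the unit disk. -/
theorem stmt_4 (δ α β : ℝ) (φ F : ℂ → ℂ)
    (hδ0 : 0 ≤ δ) (hδ1 : δ < 1)
    (hφ : DifferentiableOn ℂ φ (ball (0:ℂ) 1))
    (h0 : φ 0 = 0) (h1 : deriv φ 0 = 1)
    (hstar : ∀ z ∈ ball (0:ℂ) 1, z ≠ 0 → δ < (z * deriv φ z / φ z).re)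
    (hα : 0 ≤ α) (hβ : 0 ≤ β) (hαβ : α * (β + 2 * (1 - δ)) ≤ 3)
    (hF : DifferentiableOn ℂ F (ball (0:ℂ) 1))
    (hF' : ∀ z ∈ ball (0:ℂ) 1, deriv F z ≠ 0)
    (hps : ∀ z ∈ ball (0:ℂ) 1, z ≠ 0 →
      deriv (deriv F) z / deriv F z
        = (α : ℂ) * (deriv φ z / φ z - 1 / z + (β : ℂ) / (1 - z))) :
    ∀ z ∈ ball (0:ℂ) 1,
      -(1/2 : ℝ) < (1 + z * deriv (deriv F) z / deriv F z).re := by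
  intro z hz
  by_cases hz0 : z = 0
  · subst hz0; norm_num
  · have hznorm : ‖z‖ < 1 := by simpa using hz
    have hz1 : (1 : ℂ) - z ≠ 0 := by
      intro h
      have : z = 1 := by linear_combination -h
      rw [this] at hznorm; simp at hznorm
    have key : z * deriv (deriv F) z / deriv F z
        = (α : ℂ) * ((z * deriv φ z / φ z) - 1 + (β : ℂ) * (z / (1 - z))) := by
      rw [mul_div_assoc, hps z hz hz0]
      field_simp
    rw [key]
    have hA := hstar z hz hz0
    have hB := re_half z hznorm
    set A := (z * deriv φ z / φ z).re
    set B := (z / (1 - z)).re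
    have hre : (1 + (α : ℂ) * ((z * deriv φ z / φ z) - 1 + (β : ℂ) * (z / (1 - z)))).re
        = 1 + α * (A - 1 + β * B) := by
      simp [Complex.add_re, Complex.re_ofReal_mul, Complex.sub_re, A, B]
    rw [hre]
    nlinarith [mul_nonneg hα hβ, mul_nonneg hα (sub_nonneg.2 hA.le),
      mul_nonneg (mul_nonneg hα hβ) (by linarith : (0:ℝ) ≤ B + 1/2)]
end

section
/- Let 0 ≤ δ < 1, α, β ≥ 0 with α(β + 2(1−δ)) ≤ 2, and let φ be starlike of order δ on the unit disk. Then F(z) = ∫₀ᶻ (φ(ζ)/(ζ(1−ζ)^β))^α dζ satisfies Re(1 + zF''(z)/F'(z)) > 0 for all z ∈ 𝔻, i.e., F is convex. -/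
open Complex Metric

/-- If `φ` is starlike of order `δ` and `α(β+2(1−δ)) ≤ 2` with `α,β ≥ 0`, then the
Cesàro-type transform `F` satisfies `Re(1 + zF''(z)/F'(z)) > 0`, i.e. `F` is convex, on the unit disk. -/
theorem stmt_5 (δ α β : ℝ) (φ F : ℂ → ℂ)
    (hδ0 : 0 ≤ δ) (hδ1 : δ < 1)
    (hφ : DifferentiableOn ℂ φ (ball (0:ℂ) 1))
    (h0 : φ 0 = 0) (h1 : deriv φ 0 = 1)
    (hstar : ∀ z ∈ ball (0:ℂ) 1, z ≠ 0 → δ < (z * deriv φ z / φ z).re)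
    (hα : 0 ≤ α) (hβ : 0 ≤ β) (hαβ : α * (β + 2 * (1 - δ)) ≤ 2)
    (hF : DifferentiableOn ℂ F (ball (0:ℂ) 1))
    (hF' : ∀ z ∈ ball (0:ℂ) 1, deriv F z ≠ 0)
    (hps : ∀ z ∈ ball (0:ℂ) 1, z ≠ 0 →
      deriv (deriv F) z / deriv F z
        = (α : ℂ) * (deriv φ z / φ z - 1 / z + (β : ℂ) / (1 - z))) :
    ∀ z ∈ ball (0:ℂ) 1,
      (0 : ℝ) < (1 + z * deriv (deriv F) z / deriv F z).re := by
  intro z hz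
  rcases eq_or_ne z 0 with rfl | hz0
  · simp
  · have habs : ‖z‖ < 1 := by simpa using mem_ball_zero_iff.mp hz
    have hzn : z.re ^ 2 + z.im ^ 2 < 1 := by
      have h3 : Complex.normSq z < 1 := by
        rw [Complex.normSq_eq_norm_sq]
        nlinarith [norm_nonneg z]
      simpa [Complex.normSq_apply, sq] using h3
    have hz1 : (1 : ℂ) - z ≠ 0 := by
      intro h
      have : z = 1 := by linear_combination -h
      rw [this] at habs; simp at habs
    have key := hps z hz hz0
    have hrw : z * deriv (deriv F) z / deriv F z
        = (α : ℂ) * (z * deriv φ z / φ z - 1 + (β : ℂ) * (z / (1 - z))) := by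
      rw [mul_div_assoc, key]
      field_simp
    rw [hrw]
    have hA := hstar z hz hz0
    have hposN : 0 < Complex.normSq (1 - z) := Complex.normSq_pos.mpr hz1
    have hB : -(1/2 : ℝ) < (z / (1 - z)).re := by
      rw [Complex.div_re, ← add_div, lt_div_iff₀ hposN]
      simp only [Complex.sub_re, Complex.sub_im, Complex.one_re, Complex.one_im,
        Complex.normSq_apply]
      nlinarith
    have hre : (1 + (α : ℂ) * (z * deriv φ z / φ z - 1 + (β : ℂ) * (z / (1 - z)))).re
        = 1 + α * ((z * deriv φ z / φ z).re - 1 + β * (z / (1 - z)).re) := by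
      simp [Complex.add_re, Complex.mul_re, Complex.sub_re, Complex.sub_im,
        Complex.ofReal_re, Complex.ofReal_im]
    rw [hre]
    set A := (z * deriv φ z / φ z).re
    set B := (z / (1 - z)).re
    rcases eq_or_lt_of_le hα with h0' | hpos
    · rw [← h0']; norm_num
    · nlinarith [mul_pos hpos (sub_pos.mpr hA),
        mul_nonneg (mul_nonneg hpos.le hβ) (by linarith : (0:ℝ) ≤ B + 1/2)]
end

section
/- The function k(z) = ∫₀ᶻ (1 − iζ²)^{−1} dζ satisfies Re(1 + zk''(z)/k'(z)) > 0 for all z in the unit disk, i.e., k is convex. -/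
open Complex Metric

/-- The function `k(z) = ∫₀ᶻ (1 − iζ²)⁻¹ dζ` satisfies
`Re(1 + zk''(z)/k'(z)) > 0` on the unit disk, i.e. `k` is convex. -/
theorem stmt_6 (k : ℂ → ℂ)
    (hk : DifferentiableOn ℂ k (ball (0:ℂ) 1))
    (hk' : ∀ z ∈ ball (0:ℂ) 1, deriv k z = (1 - Complex.I * z^2)⁻¹) :
    ∀ z ∈ ball (0:ℂ) 1,
      (0 : ℝ) < (1 + z * deriv (deriv k) z / deriv k z).re := by
  intro z hz
  have hzb := hz
  simp only [mem_ball, dist_zero_right] at hz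
  have hna : ‖Complex.I * z ^ 2‖ < 1 := by
    have := norm_nonneg z
    simp only [norm_mul, Complex.norm_I, norm_pow, one_mul]
    nlinarith
  have hu : (1 : ℂ) - Complex.I * z ^ 2 ≠ 0 := by
    intro h
    have h1 : Complex.I * z ^ 2 = 1 := by linear_combination -h
    rw [h1] at hna
    simp at hna
  have hd2 : deriv (deriv k) z = 2 * Complex.I * z / (1 - Complex.I * z ^ 2) ^ 2 := by
    have hev : deriv k =ᶠ[nhds z] fun w => (1 - Complex.I * w ^ 2)⁻¹ :=
      Filter.eventuallyEq_of_mem (isOpen_ball.mem_nhds hzb) hk'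
    rw [hev.deriv_eq]
    have h1 : HasDerivAt (fun w : ℂ => 1 - Complex.I * w ^ 2) (-(Complex.I * (2 * z))) z := by
      have := ((hasDerivAt_pow 2 z).const_mul Complex.I).const_sub 1
      simpa using this
    have h2 := (h1.inv hu).deriv
    rw [show (fun w : ℂ => (1 - Complex.I * w ^ 2)⁻¹) = (fun w : ℂ => 1 - Complex.I * w ^ 2)⁻¹ from rfl, h2]
    field_simp
  rw [hd2, hk' z hzb]
  have key : 1 + z * (2 * Complex.I * z / (1 - Complex.I * z ^ 2) ^ 2) /
      (1 - Complex.I * z ^ 2)⁻¹ = (1 + Complex.I * z ^ 2) / (1 - Complex.I * z ^ 2) := by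
    rw [div_inv_eq_mul, eq_div_iff hu, div_eq_mul_inv, ← inv_pow]
    linear_combination (2 * Complex.I * z ^ 2 * ((1 - Complex.I * z ^ 2) * (1 - Complex.I * z ^ 2)⁻¹ + 1)) * mul_inv_cancel₀ hu
  rw [key]
  set a : ℂ := Complex.I * z ^ 2 with ha
  have hns : Complex.normSq a < 1 := by
    have : Complex.normSq a = ‖a‖ ^ 2 := by
      simp [Complex.normSq_eq_norm_sq]
    nlinarith [norm_nonneg a]
  have hns2 : 0 < Complex.normSq (1 - a) := by
    apply Complex.normSq_pos.2
    simpa using hu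
  rw [Complex.div_re]
  have hre : ((1 : ℂ) + a).re = 1 + a.re := by simp
  have him : ((1 : ℂ) + a).im = a.im := by simp
  have hre2 : ((1 : ℂ) - a).re = 1 - a.re := by simp
  have him2 : ((1 : ℂ) - a).im = -a.im := by simp
  rw [hre, him, hre2, him2]
  have hnsq : Complex.normSq a = a.re ^ 2 + a.im ^ 2 := by
    rw [Complex.normSq_apply]; ring
  rw [hnsq] at hns
  have : (1 + a.re) * (1 - a.re) + a.im * (-a.im) = 1 - (a.re ^ 2 + a.im ^ 2) := by ring
  rw [← add_div, this]
  have h1 : 0 < 1 - (a.re ^ 2 + a.im ^ 2) := by linarith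
  positivity
end

section
/- Let h, g be analytic on 𝔻 with h(0)=g(0)=0, h'(0)=1, g'(0)=0, and suppose the dilatation ω = g'/h' satisfies |ω(z)| < 1 on 𝔻. If for every unimodular λ the analytic function h + λg is injective on 𝔻, then the harmonic mapping f = h + conj(g) is injective on 𝔻. -/
open Complex Metric

/-- Hernández–Martín stability: if `h + λg` is injective on the unit disk for
every unimodular `λ`, then the sense-preserving harmonic mapping
`f = h + conj g` is injective on the unit disk. -/
theorem stmt_18 (h g : ℂ → ℂ)
    (hh : DifferentiableOn ℂ h (ball (0:ℂ) 1))
    (hg : DifferentiableOn ℂ g (ball (0:ℂ) 1))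
    (h0 : h 0 = 0) (g0 : g 0 = 0)
    (h1 : deriv h 0 = 1) (g1 : deriv g 0 = 0)
    (hdil : ∀ z ∈ ball (0:ℂ) 1, ‖deriv g z / deriv h z‖ < 1)
    (hstable : ∀ lam : ℂ, ‖lam‖ = 1 →
      Set.InjOn (fun z => h z + lam * g z) (ball (0:ℂ) 1)) :
    Set.InjOn (fun z => h z + (starRingEnd ℂ) (g z)) (ball (0:ℂ) 1) := by
  intro z1 hz1 z2 hz2 heq
  simp only at heq
  have key : h z1 - h z2 = (starRingEnd ℂ) (g z2 - g z1) := by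
    rw [map_sub]; linear_combination heq
  by_cases hd : g z2 - g z1 = 0
  · have hgeq : g z2 = g z1 := sub_eq_zero.mp hd
    have hcoll : h z1 + (1:ℂ) * g z1 = h z2 + (1:ℂ) * g z2 := by
      have : (starRingEnd ℂ) (g z2 - g z1) = 0 := by rw [hd, map_zero]
      have hheq : h z1 = h z2 := by
        rw [hd, map_zero] at key; exact sub_eq_zero.mp key
      rw [hheq, hgeq]
    exact hstable 1 (by simp) hz1 hz2 hcoll
  · set lam : ℂ := (starRingEnd ℂ) (g z2 - g z1) / (g z2 - g z1) with hlam
    have habs : ‖lam‖ = 1 := by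
      rw [hlam, norm_div, Complex.norm_conj, div_self]
      exact norm_ne_zero_iff.mpr hd
    have hcoll : h z1 + lam * g z1 = h z2 + lam * g z2 := by
      have : lam * (g z2 - g z1) = h z1 - h z2 := by
        rw [hlam, div_mul_cancel₀ _ hd, key]
      linear_combination -this
    exact hstable lam habs hz1 hz2 hcoll
end
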